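/- Conformal covariance of the Dirac boundary value problem: if ψ : TΩ → Ω is the inverse of a conformal isomorphism T : Ω → TΩ, (F₀, F₁) satisfies ∂̄_w F₀(w,z) = (α(w)/2)F₁(w,z) (away from the diagonal) and ∂_w F₁(w,z) = (conj(α)(w)/2)F₀(w,z) on Ω², then TF_s(w₁,w₂) := ψ'(w₂)·F_s(ψ(w₁),ψ(w₂)) satisfies the same equations on (TΩ)² with α replaced by Tα(w) = conj(ψ'(w))·α(ψ(w)). -/

import Mathlib

open Complex ComplexConjugate

noncomputable def dX (f : ℂ → ℂ) (z : ℂ) : ℂ := fderiv ℝ f z 1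
noncomputable def dY (f : ℂ → ℂ) (z : ℂ) : ℂ := fderiv ℝ f z Complex.I
noncomputable def dbar (f : ℂ → ℂ) (z : ℂ) : ℂ := (dX f z + Complex.I * dY f z) / 2
noncomputable def dd (f : ℂ → ℂ) (z : ℂ) : ℂ := (dX f z - Complex.I * dY f z) / 2

lemma fderiv_real_apply {ψ : ℂ → ℂ} {w : ℂ} (h : DifferentiableAt ℂ ψ w) (v : ℂ) :
    fderiv ℝ ψ w v = deriv ψ w * v := by
  rw [(h.hasFDerivAt.restrictScalars ℝ).fderiv]
  have : fderiv ℂ ψ w v = v • fderiv ℂ ψ w 1 := by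
    rw [← map_smul, smul_eq_mul, mul_one]
  simp [ContinuousLinearMap.coe_restrictScalars', this, fderiv_apply_one_eq_deriv, smul_eq_mul, mul_comm]

lemma fderiv_split {g : ℂ → ℂ} {p : ℂ} (v : ℂ) :
    fderiv ℝ g p v = (v.re : ℂ) * dX g p + (v.im : ℂ) * dY g p := by
  have hv : v = v.re • (1 : ℂ) + v.im • Complex.I := by
    simp [Complex.real_smul, Complex.re_add_im]
  rw [dX, dY]
  conv_lhs => rw [hv]
  rw [map_add, map_smul, map_smul]
  simp [Complex.real_smul]

lemma comp_key {g ψ : ℂ → ℂ} {w : ℂ} (hψ : DifferentiableAt ℂ ψ w)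
    (hg : DifferentiableAt ℝ g (ψ w)) :
    dbar (fun x => g (ψ x)) w = (starRingEnd ℂ) (deriv ψ w) * dbar g (ψ w) ∧
    dd (fun x => g (ψ x)) w = deriv ψ w * dd g (ψ w) := by
  have hψℝ : DifferentiableAt ℝ ψ w := hψ.restrictScalars ℝ
  have hcomp : ∀ v, fderiv ℝ (fun x => g (ψ x)) w v
      = fderiv ℝ g (ψ w) (fderiv ℝ ψ w v) := by
    intro v
    rw [show (fun x => g (ψ x)) = g ∘ ψ from rfl, fderiv_comp w hg hψℝ]
    rfl
  set a := deriv ψ w with ha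
  set X := dX g (ψ w)
  set Y := dY g (ψ w)
  have h1 : fderiv ℝ (fun x => g (ψ x)) w 1
      = (a.re : ℂ) * X + (a.im : ℂ) * Y := by
    rw [hcomp, fderiv_real_apply hψ, mul_one, fderiv_split]
  have h2 : fderiv ℝ (fun x => g (ψ x)) w Complex.I
      = (-a.im : ℂ) * X + (a.re : ℂ) * Y := by
    rw [hcomp, fderiv_real_apply hψ, fderiv_split]
    simp
    rfl
  have hconj : (starRingEnd ℂ) a = (a.re : ℂ) - (a.im : ℂ) * Complex.I := by
    simp [Complex.ext_iff]
  constructor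
  · rw [dbar, dX, dY, h1, h2, dbar]
    linear_combination ((a.im : ℂ) * Y / 2) * Complex.I_mul_I
      - ((X + Complex.I * Y) / 2) * hconj
  · rw [dd, dX, dY, h1, h2, dd]
    linear_combination ((a.im : ℂ) * Y / 2) * Complex.I_mul_I
      + ((X - Complex.I * Y) / 2) * (Complex.re_add_im a)

lemma const_mul_key {f : ℂ → ℂ} {w : ℂ} (c : ℂ) (hf : DifferentiableAt ℝ f w) :
    dbar (fun x => c * f x) w = c * dbar f w ∧ dd (fun x => c * f x) w = c * dd f w := by
  have h := fderiv_const_mul hf c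
  have h1 : dX (fun x => c * f x) w = c * dX f w := by
    rw [dX, dX, h]; simp
  have h2 : dY (fun x => c * f x) w = c * dY f w := by
    rw [dY, dY, h]; simp
  constructor
  · rw [dbar, dbar, h1, h2]; ring
  · rw [dd, dd, h1, h2]; ring

/-- Conformal covariance of the Dirac boundary value problem: if `ψ : TΩ → Ω` is the
inverse of a conformal isomorphism `T : Ω → TΩ` and `(F₀, F₁)` satisfies
`∂̄_w F₀(w,z) = (α(w)/2)·F₁(w,z)` away from the diagonal and
`∂_w F₁(w,z) = (conj α(w)/2)·F₀(w,z)` on `Ω²`, then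
`TF_s(w₁,w₂) := ψ'(w₂)·F_s(ψ(w₁),ψ(w₂))` satisfies the same equations on `(TΩ)²` with
`α` replaced by `Tα(w) = conj(ψ'(w))·α(ψ(w))`. -/
theorem stmt18 (Ω Ω' : Set ℂ) (hΩ : IsOpen Ω) (hΩ' : IsOpen Ω')
    (ψ : ℂ → ℂ) (hψhol : DifferentiableOn ℂ ψ Ω')
    (hψbij : Set.BijOn ψ Ω' Ω) (hψ' : ∀ w ∈ Ω', deriv ψ w ≠ 0)
    (α : ℂ → ℂ) (hα : ContinuousOn α Ω)
    (F₀ F₁ : ℂ → ℂ → ℂ)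
    (hF₀d : ∀ z ∈ Ω, ∀ w ∈ Ω, w ≠ z → DifferentiableAt ℝ (fun w' => F₀ w' z) w)
    (hF₁d : ∀ z ∈ Ω, ∀ w ∈ Ω, DifferentiableAt ℝ (fun w' => F₁ w' z) w)
    (heq0 : ∀ z ∈ Ω, ∀ w ∈ Ω, w ≠ z →
      dbar (fun w' => F₀ w' z) w = (α w / 2) * F₁ w z)
    (heq1 : ∀ z ∈ Ω, ∀ w ∈ Ω,
      dd (fun w' => F₁ w' z) w = (conj (α w) / 2) * F₀ w z) :
    (∀ z ∈ Ω', ∀ w ∈ Ω', w ≠ z →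
      dbar (fun w' => deriv ψ z * F₀ (ψ w') (ψ z)) w
        = (conj (deriv ψ w) * α (ψ w) / 2) * (deriv ψ z * F₁ (ψ w) (ψ z))) ∧
    (∀ z ∈ Ω', ∀ w ∈ Ω',
      dd (fun w' => deriv ψ z * F₁ (ψ w') (ψ z)) w
        = (conj (conj (deriv ψ w) * α (ψ w)) / 2) * (deriv ψ z * F₀ (ψ w) (ψ z))) := by
  constructor
  · intro z hz w hw hwz
    have hψw : DifferentiableAt ℂ ψ w := hψhol.differentiableAt (hΩ'.mem_nhds hw)
    have hwΩ : ψ w ∈ Ω := hψbij.mapsTo hw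
    have hzΩ : ψ z ∈ Ω := hψbij.mapsTo hz
    have hne : ψ w ≠ ψ z := fun h => hwz (hψbij.injOn hw hz h)
    have hg : DifferentiableAt ℝ (fun w' => F₀ w' (ψ z)) (ψ w) := hF₀d _ hzΩ _ hwΩ hne
    have hkey := (comp_key hψw hg).1
    have hgc : DifferentiableAt ℝ (fun x => F₀ (ψ x) (ψ z)) w :=
      hg.comp w (hψw.restrictScalars ℝ)
    have hc := (const_mul_key (deriv ψ z) hgc).1
    rw [hc, hkey, heq0 _ hzΩ _ hwΩ hne]
    ring
  · intro z hz w hw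
    have hψw : DifferentiableAt ℂ ψ w := hψhol.differentiableAt (hΩ'.mem_nhds hw)
    have hwΩ : ψ w ∈ Ω := hψbij.mapsTo hw
    have hzΩ : ψ z ∈ Ω := hψbij.mapsTo hz
    have hg : DifferentiableAt ℝ (fun w' => F₁ w' (ψ z)) (ψ w) := hF₁d _ hzΩ _ hwΩ
    have hkey := (comp_key hψw hg).2
    have hgc : DifferentiableAt ℝ (fun x => F₁ (ψ x) (ψ z)) w :=
      hg.comp w (hψw.restrictScalars ℝ)
    have hc := (const_mul_key (deriv ψ z) hgc).2
    rw [hc, hkey, heq1 _ hzΩ _ hwΩ]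
    simp only [map_mul, Complex.conj_conj]
    ring
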